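/- arXiv:1901.07073 — 9 statements merged into one kernel-verified Lean document; each statement's English description precedes it below -/
import Mathlib

section
/- For every integer k ≥ 3, the infinite sum over j ≥ k of Γ(j)Γ(2k-1)/(Γ(j+k)Γ(k-1)) equals 1; i.e., the limiting degree distribution (b_{j,k})_{j≥k} is a probability distribution. -/
open Real

theorem b_sums_to_one (k : ℕ) (hk : 3 ≤ k) :
    ∑' j : ℕ, Real.Gamma ((j + k : ℕ) : ℝ) * Real.Gamma (2 * k - 1) /
      (Real.Gamma (((j + k : ℕ) : ℝ) + k) * Real.Gamma ((k : ℝ) - 1)) = 1 := by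
  obtain ⟨m, rfl⟩ : ∃ m, k = m + 3 := ⟨k - 3, by omega⟩
  -- a j : the term, c j : telescoping sequence
  set a : ℕ → ℝ := fun j =>
    ((j + m + 2).factorial * (2 * m + 4).factorial : ℝ) /
      ((j + 2 * m + 5).factorial * (m + 1).factorial) with ha
  set c : ℕ → ℝ := fun j =>
    ((j + m + 2).factorial * (2 * m + 4).factorial : ℝ) /
      ((j + 2 * m + 4).factorial * (m + 2).factorial) with hc
  have hterm : ∀ j : ℕ, Real.Gamma ((j + (m + 3) : ℕ) : ℝ) * Real.Gamma (2 * (m + 3 : ℕ) - 1) /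
      (Real.Gamma (((j + (m + 3) : ℕ) : ℝ) + (m + 3 : ℕ)) * Real.Gamma (((m + 3 : ℕ) : ℝ) - 1)) = a j := by
    intro j
    have h1 : ((j + (m + 3) : ℕ) : ℝ) = ((j + m + 2 : ℕ) : ℝ) + 1 := by push_cast; ring
    have h2 : (2 * ((m : ℝ) + 3) - 1 : ℝ) = ((2 * m + 4 : ℕ) : ℝ) + 1 := by push_cast; ring
    have h3 : (((j + (m + 3) : ℕ) : ℝ) + ((m + 3 : ℕ) : ℝ)) = ((j + 2 * m + 5 : ℕ) : ℝ) + 1 := by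
      push_cast; ring
    have h4 : (((m + 3 : ℕ) : ℝ) - 1) = ((m + 1 : ℕ) : ℝ) + 1 := by push_cast; ring
    have h2' : (2 * ((m + 3 : ℕ) : ℝ) - 1 : ℝ) = ((2 * m + 4 : ℕ) : ℝ) + 1 := by push_cast; ring
    have h4' : (((m + 3 : ℕ) : ℝ) - 1) = ((m + 1 : ℕ) : ℝ) + 1 := by push_cast; ring
    rw [h3, h1, h2', h4', Real.Gamma_nat_eq_factorial, Real.Gamma_nat_eq_factorial,
      Real.Gamma_nat_eq_factorial, Real.Gamma_nat_eq_factorial]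
  have htele : ∀ j : ℕ, a j = c j - c (j + 1) := by
    intro j
    rw [ha, hc]
    simp only
    have e1 : (j + 1 + 2 * m + 4) = (j + 2 * m + 5) := by ring
    have e2 : (j + 1 + m + 2) = (j + m + 3) := by ring
    rw [e1, e2]
    have f1 : ((j + 2 * m + 5).factorial : ℝ) = (j + 2 * m + 5) * (j + 2 * m + 4).factorial := by
      rw [show j + 2 * m + 5 = (j + 2 * m + 4) + 1 by ring, Nat.factorial_succ]; push_cast; ring
    have f2 : ((j + m + 3).factorial : ℝ) = (j + m + 3) * (j + m + 2).factorial := by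
      rw [show j + m + 3 = (j + m + 2) + 1 by ring, Nat.factorial_succ]; push_cast; ring
    have f3 : ((m + 2).factorial : ℝ) = (m + 2) * (m + 1).factorial := by
      rw [Nat.factorial_succ]; push_cast; ring
    have p1 : ((j + 2 * m + 4).factorial : ℝ) ≠ 0 := by positivity
    have p2 : ((m + 1).factorial : ℝ) ≠ 0 := by positivity
    have p3 : ((j + 2 * m + 5 : ℕ) : ℝ) ≠ 0 := by positivity
    have p4 : ((m + 2 : ℕ) : ℝ) ≠ 0 := by positivity
    rw [f1, f2, f3]
    field_simp
    ring
  have hc0 : c 0 = 1 := by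
    rw [hc]; simp only
    rw [show 0 + m + 2 = m + 2 by ring, show 0 + 2 * m + 4 = 2 * m + 4 by ring]
    rw [div_eq_one_iff_eq (by positivity)]
    ring
  have hclim : Filter.Tendsto c Filter.atTop (nhds 0) := by
    have hb : ∀ j : ℕ, c j ≤ ((2 * m + 4).factorial : ℝ) / ((j + 1 : ℕ) : ℝ) := by
      intro j
      rw [hc]; simp only
      have hfac : (j + 1) * (j + m + 2).factorial ≤ (j + 2 * m + 4).factorial := by
        calc (j + 1) * (j + m + 2).factorial ≤ ((j + m + 2) + 1) * (j + m + 2).factorial :=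
              Nat.mul_le_mul_right _ (by omega)
          _ = ((j + m + 2) + 1).factorial := (Nat.factorial_succ _).symm
          _ ≤ (j + 2 * m + 4).factorial := Nat.factorial_le (by omega)
      have h1 : ((j : ℝ) + 1) * (j + m + 2).factorial ≤ (j + 2 * m + 4).factorial := by
        exact_mod_cast hfac
      rw [div_le_div_iff₀ (by positivity) (by positivity)]
      have hm : (1 : ℝ) ≤ ((m + 2).factorial : ℝ) := by exact_mod_cast Nat.one_le_iff_ne_zero.mpr (Nat.factorial_ne_zero _)
      push_cast
      calc ((j + m + 2).factorial : ℝ) * (2 * m + 4).factorial * ((j : ℝ) + 1)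
          = ((2 * m + 4).factorial : ℝ) * (((j : ℝ) + 1) * (j + m + 2).factorial) := by ring
        _ ≤ ((2 * m + 4).factorial : ℝ) * ((j + 2 * m + 4).factorial) := by
            apply mul_le_mul_of_nonneg_left h1 (by positivity)
        _ = ((2 * m + 4).factorial : ℝ) * ((j + 2 * m + 4).factorial) * 1 := by ring
        _ ≤ ((2 * m + 4).factorial : ℝ) * ((j + 2 * m + 4).factorial * (m + 2).factorial) := by
            rw [mul_assoc]
            apply mul_le_mul_of_nonneg_left _ (by positivity)
            have hp : (0:ℝ) < ((j + 2 * m + 4).factorial : ℝ) := by positivity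
            nlinarith [hp, hm]
    have hge : ∀ j : ℕ, 0 ≤ c j := by intro j; rw [hc]; positivity
    apply squeeze_zero hge hb
    have : Filter.Tendsto (fun j : ℕ => ((2 * m + 4).factorial : ℝ) / (j : ℝ)) Filter.atTop (nhds 0) :=
      tendsto_const_div_atTop_nhds_zero_nat _
    exact this.comp (Filter.tendsto_add_atTop_nat 1)
  have hsum : HasSum a 1 := by
    rw [hasSum_iff_tendsto_nat_of_nonneg (fun j => by rw [ha]; positivity)]
    have : ∀ n : ℕ, ∑ i ∈ Finset.range n, a i = c 0 - c n := by
      intro n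
      rw [Finset.sum_congr rfl (fun i _ => htele i), Finset.sum_range_sub' c n]
    simp only [this, hc0]
    have := hclim.const_sub 1
    simpa using this
  rw [tsum_congr hterm]
  exact hsum.tsum_eq
end

section
/- For integers k ≥ 3 and n ≥ 0, the partial sum ∑_{j=k}^{k+n} Γ(j)Γ(2k-1)/(Γ(j+k)Γ(k-1)) equals 1 − Γ(2k-1)Γ(k+n+1)/(Γ(k)Γ(2k+n)). -/
open Real Finset

/-! The summand is a telescoping difference: since `Γ(x + a) = (x + a - 1) Γ(x + a - 1)` and
`Γ(x + 1) = x Γ(x)`, the ratio `Γ(x) / Γ(x + a - 1)` drops by exactly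
`(a - 1) Γ(x) / Γ(x + a)` when `x` increases by one. Summing from `x = k` to `k + n` with `a = k`
leaves the boundary values, and the one at `x = k` contributes the `1`. -/

theorem Finset.sum_Icc_sub_succ {M : Type*} [AddCommGroup M] {m n : ℕ} (hmn : m ≤ n)
    (f : ℕ → M) : ∑ i ∈ Icc m n, (f i - f (i + 1)) = f m - f (n + 1) := by
  rw [← neg_sub (f (n + 1)), ← sum_Icc_sub hmn, ← sum_neg_distrib]
  simp only [neg_sub]

theorem Real.Gamma_div_sub_Gamma_add_one_div {x y : ℝ} (hx : x ≠ 0) (hy : 0 < y) :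
    Gamma x / Gamma y - Gamma (x + 1) / Gamma (y + 1) = (y - x) * Gamma x / Gamma (y + 1) := by
  have hΓy : Gamma y ≠ 0 := (Gamma_pos_of_pos hy).ne'
  rw [Gamma_add_one hx, Gamma_add_one hy.ne']
  field_simp

theorem Real.Gamma_div_Gamma_add_mul_Gamma_sub_one {a x : ℝ} (ha : 1 < a) (hx : 0 < x) :
    Gamma x / (Gamma (x + a) * Gamma (a - 1)) =
      (Gamma x / Gamma (x + a - 1) - Gamma (x + 1) / Gamma (x + a)) / Gamma a := by
  have hΓa : Gamma a = (a - 1) * Gamma (a - 1) := by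
    simpa using Gamma_add_one (sub_ne_zero.mpr ha.ne')
  have hΓa_pred : Gamma (a - 1) ≠ 0 := (Gamma_pos_of_pos (sub_pos.mpr ha)).ne'
  have hstep := Gamma_div_sub_Gamma_add_one_div (y := x + a - 1) hx.ne' (by linarith)
  rw [sub_add_cancel] at hstep
  rw [hstep, hΓa]
  field_simp [(sub_pos.mpr ha).ne']
  ring

theorem b_partial_sum (k n : ℕ) (hk : 3 ≤ k) :
    ∑ j ∈ Finset.Icc k (k + n),
        Real.Gamma j * Real.Gamma (2 * k - 1) /
          (Real.Gamma ((j : ℝ) + k) * Real.Gamma ((k : ℝ) - 1))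
      = 1 - Real.Gamma (2 * k - 1) * Real.Gamma ((k : ℝ) + n + 1) /
          (Real.Gamma k * Real.Gamma (2 * k + n)) := by
  have hk1 : (1 : ℝ) < k := by exact_mod_cast (by omega : 1 < k)
  set f : ℕ → ℝ := fun i => Gamma i / Gamma (i + k - 1) with hf
  have hterm : ∀ j ∈ Icc k (k + n),
      Gamma j * Gamma (2 * k - 1) / (Gamma ((j : ℝ) + k) * Gamma ((k : ℝ) - 1)) =
        Gamma (2 * k - 1) / Gamma k * (f j - f (j + 1)) := by
    intro j hj
    have hj_pos : (0 : ℝ) < j := Nat.cast_pos.mpr (by grind)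
    rw [mul_div_right_comm, Gamma_div_Gamma_add_mul_Gamma_sub_one hk1 hj_pos, hf]
    push_cast
    ring_nf
  have hΓk : Gamma (k : ℝ) ≠ 0 := (Gamma_pos_of_pos (by linarith)).ne'
  have hΓ2k : Gamma (2 * (k : ℝ) - 1) ≠ 0 := (Gamma_pos_of_pos (by linarith)).ne'
  rw [sum_congr rfl hterm, ← mul_sum, sum_Icc_sub_succ (by omega), hf]
  push_cast
  rw [show (k : ℝ) + k - 1 = 2 * k - 1 by ring, show (k : ℝ) + n + 1 + k - 1 = 2 * k + n by ring]
  field_simp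
end

section
/- For fixed integers k ≥ 3 and i ≥ 1, as n → ∞ the tail sum ∑_{j=k+n-i+1}^{k+n} Γ(j)Γ(2k-1)/(Γ(j+k)Γ(k-1)) divided by i/n tends to 0. -/
/-! The weight `b_{j,k}` is `Γ(2k-1)/Γ(k-1)` times `Γ(j)/Γ(j+k) ≤ j^{-k} ≤ j^{-2}`. For `n ≥ 2i`
every index of the tail is at least `n/2`, so the `i` terms sum to `O(i/n²)` and the ratio with
`i/n` is `O(1/n)`. -/

open Real Filter Finset

namespace Real

theorem pow_mul_Gamma_le_Gamma_add {x : ℝ} (hx : 0 < x) (m : ℕ) :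
    x ^ m * Gamma x ≤ Gamma (x + m) := by
  induction m with
  | zero => simp
  | succ m ih =>
    have hxm : 0 < x + m := by positivity
    calc x ^ (m + 1) * Gamma x = x * (x ^ m * Gamma x) := by ring
      _ ≤ (x + m) * Gamma (x + m) := by gcongr; linarith [m.cast_nonneg (α := ℝ)]
      _ = Gamma (x + ↑(m + 1)) := by rw [Nat.cast_succ, ← add_assoc, Gamma_add_one hxm.ne']

theorem Gamma_div_Gamma_add_le {x : ℝ} (hx : 0 < x) (m : ℕ) :
    Gamma x / Gamma (x + m) ≤ (x ^ m)⁻¹ := by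
  rw [div_le_iff₀ (Gamma_pos_of_pos (by positivity)), inv_mul_eq_div,
    le_div_iff₀ (by positivity)]
  simpa [mul_comm] using pow_mul_Gamma_le_Gamma_add hx m

end Real

/-- `b_{j,k}`, with `j` extended to a real variable `x`. -/
noncomputable def degreeWeight (k : ℕ) (x : ℝ) : ℝ :=
  Gamma x * Gamma (2 * k - 1) / (Gamma (x + k) * Gamma (k - 1))

theorem degreeWeight_eq (k : ℕ) (x : ℝ) :
    degreeWeight k x = Gamma x / Gamma (x + k) * (Gamma (2 * k - 1) / Gamma (k - 1)) :=
  mul_div_mul_comm _ _ _ _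

section degreeWeight

variable {k : ℕ}

theorem Gamma_two_mul_sub_one_div_pos (hk : 2 ≤ k) : 0 < Gamma (2 * k - 1) / Gamma (k - 1) := by
  have hk' : (2 : ℝ) ≤ k := by exact_mod_cast hk
  exact div_pos (Gamma_pos_of_pos (by linarith)) (Gamma_pos_of_pos (by linarith))

theorem degreeWeight_nonneg (hk : 2 ≤ k) {x : ℝ} (hx : 0 < x) : 0 ≤ degreeWeight k x := by
  rw [degreeWeight_eq]
  have := Gamma_two_mul_sub_one_div_pos hk
  have := Gamma_pos_of_pos hx
  have := Gamma_pos_of_pos (show 0 < x + k by positivity)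
  positivity

theorem degreeWeight_le (hk : 2 ≤ k) {x : ℝ} (hx : 1 ≤ x) :
    degreeWeight k x ≤ Gamma (2 * k - 1) / Gamma (k - 1) / x ^ 2 := by
  rw [degreeWeight_eq, div_eq_inv_mul _ (x ^ 2)]
  gcongr
  · exact (Gamma_two_mul_sub_one_div_pos hk).le
  calc Gamma x / Gamma (x + k) ≤ (x ^ k)⁻¹ := Gamma_div_Gamma_add_le (by linarith) k
    _ ≤ (x ^ 2)⁻¹ := by gcongr

theorem sum_Icc_degreeWeight_le (hk : 2 ≤ k) {i n : ℕ} (hn : 2 * i ≤ n) :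
    ∑ j ∈ Icc (k + n - i + 1) (k + n), degreeWeight k j
      ≤ i * (4 * (Gamma (2 * k - 1) / Gamma (k - 1)) / (n : ℝ) ^ 2) := by
  have hcard : #(Icc (k + n - i + 1) (k + n)) = i := by rw [Nat.card_Icc]; omega
  set C := Gamma (2 * k - 1) / Gamma (k - 1)
  calc ∑ j ∈ Icc (k + n - i + 1) (k + n), degreeWeight k j
      ≤ #(Icc (k + n - i + 1) (k + n)) • (4 * C / (n : ℝ) ^ 2) := by
        refine sum_le_card_nsmul _ _ _ fun j hj => ?_
        rw [mem_Icc] at hj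
        have hj1 : (1 : ℝ) ≤ j := by exact_mod_cast (show 1 ≤ j by omega)
        have hn0 : (0 : ℝ) < n := by exact_mod_cast (show 0 < n by omega)
        have hjn : (n : ℝ) ≤ 2 * j := by exact_mod_cast (show n ≤ 2 * j by omega)
        have hC : 0 ≤ C := (Gamma_two_mul_sub_one_div_pos hk).le
        calc degreeWeight k j ≤ C / (j : ℝ) ^ 2 := degreeWeight_le hk hj1
          _ = 4 * C / (2 * j : ℝ) ^ 2 := by ring
          _ ≤ 4 * C / (n : ℝ) ^ 2 := by gcongr
    _ = _ := by rw [hcard, nsmul_eq_mul]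

end degreeWeight

theorem lorenz_tail_sum_general (k i : ℕ) (hk : 3 ≤ k) :
    Tendsto (fun n : ℕ =>
      (∑ j ∈ Finset.Icc (k + n - i + 1) (k + n),
          Real.Gamma j * Real.Gamma (2 * k - 1) /
            (Real.Gamma ((j : ℝ) + k) * Real.Gamma ((k : ℝ) - 1))) /
        ((i : ℝ) / n)) atTop (nhds 0) := by
  change Tendsto (fun n : ℕ => (∑ j ∈ Icc (k + n - i + 1) (k + n), degreeWeight k j) / ((i : ℝ) / n))
    atTop (nhds 0)
  have hk2 : 2 ≤ k := by omega
  set C := Gamma (2 * k - 1) / Gamma (k - 1)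
  refine squeeze_zero' (g := fun n : ℕ => 4 * C / n) (Eventually.of_forall fun n => ?_) ?_
    (tendsto_const_div_atTop_nhds_zero_nat _)
  · refine div_nonneg (sum_nonneg fun j hj => degreeWeight_nonneg hk2 ?_) (by positivity)
    exact_mod_cast (show 0 < j by simp only [mem_Icc] at hj; omega)
  · filter_upwards [eventually_ge_atTop (2 * i)] with n hn
    have hC : 0 ≤ C := (Gamma_two_mul_sub_one_div_pos hk2).le
    refine div_le_of_le_mul₀ (by positivity) (by positivity)
      ((sum_Icc_degreeWeight_le hk2 hn).trans_eq ?_)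
    ring

theorem lorenz_tail_sum (k i : ℕ) (hk : 3 ≤ k) (hi : 1 ≤ i) :
    Tendsto (fun n : ℕ =>
      (∑ j ∈ Finset.Icc (k + n - i + 1) (k + n),
          Real.Gamma j * Real.Gamma (2 * k - 1) /
            (Real.Gamma ((j : ℝ) + k) * Real.Gamma ((k : ℝ) - 1))) /
        ((i : ℝ) / n)) atTop (nhds 0) :=
  lorenz_tail_sum_general k i hk
end

section
/- Let X_{n,k} denote the number of vertices of degree k (terminal vertices) in a random Apollonian network of index k at time n. Its expectation satisfies E[X_{n+1,k}] = E[X_{n,k}](1 − k/((k-1)n + 1)) + 1, and for all n ≥ 1, |E[X_{n,k}] − (k-1)n/(2k-1)| ≤ 2k²/(2k-1). -/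
/-!
Writing `e n = a n - (k - 1) n / (2k - 1)` and `p n = k / ((k - 1) n + 1) ∈ [0, 1]`, the recurrence
becomes `e (n + 1) = (1 - p n) e n + p n / (2k - 1)`, a convex combination of `e n` and
`1 / (2k - 1)`. Both lie in `[-B, B]` for `B = 2k² / (2k - 1)`, so this interval is invariant.
-/

lemma abs_mul_one_sub_add_le {e p q B : ℝ} (hp₁ : p ≤ 1) (hq : |q| ≤ p * B)
    (he : |e| ≤ B) : |e * (1 - p) + q| ≤ B :=
  calc |e * (1 - p) + q| ≤ |e| * (1 - p) + |q| := by
        grw [abs_add_le, abs_mul, abs_of_nonneg (sub_nonneg.2 hp₁)]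
    _ ≤ B * (1 - p) + p * B := by gcongr
    _ = B := by ring

lemma abs_le_of_recurrence_mul_one_sub_add {e p q : ℕ → ℝ} {B : ℝ} (h₁ : |e 1| ≤ B)
    (hp₁ : ∀ n, 1 ≤ n → p n ≤ 1)
    (hq : ∀ n, 1 ≤ n → |q n| ≤ p n * B)
    (hrec : ∀ n, 1 ≤ n → e (n + 1) = e n * (1 - p n) + q n) :
    ∀ n, 1 ≤ n → |e n| ≤ B := by
  intro n hn
  induction n, hn using Nat.le_induction with
  | base => exact h₁
  | succ n hn ih =>
    rw [hrec n hn]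
    exact abs_mul_one_sub_add_le (hp₁ n hn) (hq n hn) ih

lemma sub_one_mul_div_two_mul_sub_one_succ {K n : ℝ} (hD : (K - 1) * n + 1 ≠ 0)
    (h2K : 2 * K - 1 ≠ 0) :
    (K - 1) * (n + 1) / (2 * K - 1) = (K - 1) * n / (2 * K - 1) * (1 - K / ((K - 1) * n + 1)) + 1
      - K / ((K - 1) * n + 1) / (2 * K - 1) := by
  grind

section

variable {K : ℝ} (hK : 1 ≤ K) {n : ℝ} (hn : 1 ≤ n)
include hK hn

lemma le_sub_one_mul_add_one : K ≤ (K - 1) * n + 1 := by nlinarith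

lemma div_sub_one_mul_add_one_mem_Icc : K / ((K - 1) * n + 1) ∈ Set.Icc 0 1 :=
  have hD := le_sub_one_mul_add_one hK hn
  ⟨by positivity, (div_le_one (by linarith)).2 hD⟩

end

theorem terminal_vertex_expectation_bound (k : ℕ) (hk : 3 ≤ k) (a : ℕ → ℝ)
    (h1 : a 1 = 1)
    (hrec : ∀ n : ℕ, 1 ≤ n →
      a (n + 1) = a n * (1 - (k : ℝ) / (((k : ℝ) - 1) * n + 1)) + 1) :
    ∀ n : ℕ, 1 ≤ n →
      |a n - ((k : ℝ) - 1) * n / (2 * k - 1)| ≤ 2 * (k : ℝ) ^ 2 / (2 * k - 1) := by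
  have hK : (1 : ℝ) ≤ k := by norm_cast; omega
  have h2K : (0 : ℝ) < 2 * k - 1 := by linarith
  set p : ℕ → ℝ := fun n ↦ (k : ℝ) / (((k : ℝ) - 1) * n + 1)
  have hp (n : ℕ) (hn : 1 ≤ n) : p n ∈ Set.Icc 0 1 :=
    div_sub_one_mul_add_one_mem_Icc hK (by exact_mod_cast hn)
  refine abs_le_of_recurrence_mul_one_sub_add (p := p) (q := fun n ↦ p n / (2 * k - 1))
    ?_ (fun n hn ↦ (hp n hn).2) (fun n hn ↦ ?_) (fun n hn ↦ ?_)
  · have he₁ : (1 : ℝ) - (k - 1) * (1 : ℕ) / (2 * k - 1) = k / (2 * k - 1) := by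
      rw [Nat.cast_one, mul_one, one_sub_div h2K.ne']
      ring_nf
    rw [h1, he₁, abs_of_nonneg (by positivity)]
    gcongr
    nlinarith
  · rw [abs_of_nonneg (div_nonneg (hp n hn).1 h2K.le), div_eq_mul_one_div (p n)]
    gcongr
    nlinarith
  · have hD : ((k : ℝ) - 1) * n + 1 ≠ 0 := by
      have := le_sub_one_mul_add_one hK (n := n) (by exact_mod_cast hn); positivity
    rw [hrec n hn, Nat.cast_add_one, sub_one_mul_div_two_mul_sub_one_succ hD h2K.ne']
    ring
end

section
/- Let k ≥ 3 and fix j > k. Suppose sequences (a_n) and (c_n) satisfy a_{n+1} = a_n(1 − j/((k-1)n+1)) + c_n · (j-1)/((k-1)n+1), where c_n/n → b_{j-1,k}. Then a_n/n → b_{j-1,k} · (j-1)/(j+k-1). -/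
open Real Filter

set_option maxHeartbeats 1000000

theorem degree_recurrence_limit (k j : ℕ) (hk : 3 ≤ k) (hj : k < j)
    (a c : ℕ → ℝ)
    (hrec : ∀ n : ℕ,
      a (n + 1) = a n * (1 - (j : ℝ) / (((k : ℝ) - 1) * n + 1)) +
        c n * ((j : ℝ) - 1) / (((k : ℝ) - 1) * n + 1))
    (hc : Tendsto (fun n : ℕ => c n / n) atTop
      (nhds (Real.Gamma ((j : ℝ) - 1) * Real.Gamma (2 * k - 1) /
        (Real.Gamma ((j : ℝ) - 1 + k) * Real.Gamma ((k : ℝ) - 1))))) :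
    Tendsto (fun n : ℕ => a n / n) atTop
      (nhds ((Real.Gamma ((j : ℝ) - 1) * Real.Gamma (2 * k - 1) /
        (Real.Gamma ((j : ℝ) - 1 + k) * Real.Gamma ((k : ℝ) - 1))) *
        ((j : ℝ) - 1) / ((j : ℝ) + k - 1))) := by
  set L : ℝ := Real.Gamma ((j : ℝ) - 1) * Real.Gamma (2 * k - 1) /
        (Real.Gamma ((j : ℝ) - 1 + k) * Real.Gamma ((k : ℝ) - 1)) with hL
  have hk' : (3:ℝ) ≤ (k:ℝ) := by exact_mod_cast hk
  have hj' : (k:ℝ) < (j:ℝ) := by exact_mod_cast hj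
  have hjpos : (0:ℝ) < (j:ℝ) := by linarith
  have hjk : (0:ℝ) < (j:ℝ) + (k:ℝ) - 1 := by linarith
  have hden : ∀ n : ℕ, (0:ℝ) < ((k:ℝ) - 1) * n + 1 := by
    intro n
    have : (0:ℝ) ≤ ((k:ℝ) - 1) * n :=
      mul_nonneg (by linarith) (Nat.cast_nonneg n)
    linarith
  set A : ℝ := L * ((j:ℝ) - 1) / ((j:ℝ) + (k:ℝ) - 1) with hA
  set d : ℕ → ℝ := fun n => a n - (A * n - A / j) with hd
  -- key identity
  have hkey : ∀ n : ℕ, d (n + 1) =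
      d n * (1 - (j:ℝ) / (((k:ℝ) - 1) * n + 1)) +
        (c n - L * n) * (((j:ℝ) - 1) / (((k:ℝ) - 1) * n + 1)) := by
    intro n
    have hD := (hden n).ne'
    have hj0 : (j:ℝ) ≠ 0 := hjpos.ne'
    have hjk0 : (j:ℝ) + (k:ℝ) - 1 ≠ 0 := hjk.ne'
    simp only [hd, hrec n, hA]
    push_cast
    field_simp
    ring
  set v : ℕ → ℝ := fun n => |c n - L * n| * (((j:ℝ) - 1) / (((k:ℝ) - 1) * n + 1)) with hv
  have hvnonneg : ∀ n, 0 ≤ v n := by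
    intro n
    exact mul_nonneg (abs_nonneg _) (div_nonneg (by linarith) (hden n).le)
  -- v → 0
  have hv0 : Tendsto v atTop (nhds 0) := by
    have h1 : Tendsto (fun n : ℕ => |c n / n - L| * (((j:ℝ) - 1) / ((k:ℝ) - 1)))
        atTop (nhds 0) := by
      have h0 : Tendsto (fun n : ℕ => c n / n - L) atTop (nhds (L - L)) :=
        hc.sub tendsto_const_nhds
      have : Tendsto (fun n : ℕ => |c n / n - L|) atTop (nhds 0) := by
        simpa using h0.abs
      simpa using this.mul_const (((j:ℝ) - 1) / ((k:ℝ) - 1))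
    apply squeeze_zero' (Filter.Eventually.of_forall hvnonneg) _ h1
    filter_upwards [Filter.eventually_ge_atTop 1] with n hn
    have hn' : (0:ℝ) < (n:ℝ) := by exact_mod_cast hn
    have habs : |c n - L * n| = |c n / n - L| * n := by
      have heq : (c n / n - L) * n = c n - L * n := by field_simp
      rw [← heq, abs_mul, abs_of_pos hn']
    rw [hv]
    simp only
    rw [habs]
    have hfac : (n:ℝ) * (((j:ℝ) - 1) / (((k:ℝ) - 1) * n + 1)) ≤ ((j:ℝ) - 1) / ((k:ℝ) - 1) := by
      rw [mul_div_assoc', div_le_div_iff₀ (hden n) (by linarith : (0:ℝ) < (k:ℝ) - 1)]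
      nlinarith [hn', hj', hk']
    calc |c n / n - L| * n * (((j:ℝ) - 1) / (((k:ℝ) - 1) * n + 1))
        = |c n / n - L| * ((n:ℝ) * (((j:ℝ) - 1) / (((k:ℝ) - 1) * n + 1))) := by ring
      _ ≤ |c n / n - L| * (((j:ℝ) - 1) / ((k:ℝ) - 1)) := by
          exact mul_le_mul_of_nonneg_left hfac (abs_nonneg _)
  -- Cesàro
  have hces : Tendsto (fun n : ℕ => (∑ i ∈ Finset.range n, v i) / n) atTop (nhds 0) := by
    have := hv0.cesaro
    simpa [div_eq_inv_mul] using this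
  -- inductive bound
  have hbd : ∀ n, j ≤ n → |d n| ≤ |d j| + ∑ i ∈ Finset.range n, v i := by
    intro n hn
    induction n, hn using Nat.le_induction with
    | base =>
        have : (0:ℝ) ≤ ∑ i ∈ Finset.range j, v i :=
          Finset.sum_nonneg fun i _ => hvnonneg i
        linarith
    | succ n hn ih =>
        have hD := hden n
        have hp0 : (0:ℝ) ≤ (j:ℝ) / (((k:ℝ) - 1) * n + 1) :=
          div_nonneg hjpos.le hD.le
        have hp1 : (j:ℝ) / (((k:ℝ) - 1) * n + 1) ≤ 1 := by
          rw [div_le_one hD]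
          have hn' : (j:ℝ) ≤ (n:ℝ) := by exact_mod_cast hn
          nlinarith
        have h1 : |d (n + 1)| ≤ |d n| * |1 - (j:ℝ) / (((k:ℝ) - 1) * n + 1)| + v n := by
          rw [hkey n]
          calc |d n * (1 - (j:ℝ) / (((k:ℝ) - 1) * n + 1)) +
                (c n - L * n) * (((j:ℝ) - 1) / (((k:ℝ) - 1) * n + 1))|
              ≤ |d n * (1 - (j:ℝ) / (((k:ℝ) - 1) * n + 1))| +
                |(c n - L * n) * (((j:ℝ) - 1) / (((k:ℝ) - 1) * n + 1))| := abs_add_le _ _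
            _ = |d n| * |1 - (j:ℝ) / (((k:ℝ) - 1) * n + 1)| + v n := by
                rw [abs_mul, abs_mul]
                congr 2
                exact abs_of_nonneg (div_nonneg (by linarith) hD.le)
        have h2 : |1 - (j:ℝ) / (((k:ℝ) - 1) * n + 1)| ≤ 1 := by
          rw [abs_le]; constructor <;> linarith
        have h3 : |d n| * |1 - (j:ℝ) / (((k:ℝ) - 1) * n + 1)| ≤ |d n| := by
          calc |d n| * |1 - (j:ℝ) / (((k:ℝ) - 1) * n + 1)| ≤ |d n| * 1 :=
                mul_le_mul_of_nonneg_left h2 (abs_nonneg _)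
            _ = |d n| := mul_one _
        rw [Finset.sum_range_succ]
        linarith
  -- d n / n → 0
  have hdlim : Tendsto (fun n : ℕ => d n / n) atTop (nhds 0) := by
    have hub : Tendsto (fun n : ℕ => |d j| / n + (∑ i ∈ Finset.range n, v i) / n)
        atTop (nhds 0) := by
      have h1 : Tendsto (fun n : ℕ => |d j| / n) atTop (nhds 0) :=
        tendsto_const_nhds.div_atTop tendsto_natCast_atTop_atTop
      simpa using h1.add hces
    apply squeeze_zero_norm' _ hub
    filter_upwards [Filter.eventually_ge_atTop (max j 1)] with n hn
    have hnj : j ≤ n := le_trans (le_max_left _ _) hn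
    have hn1 : 1 ≤ n := le_trans (le_max_right _ _) hn
    have hn' : (0:ℝ) < (n:ℝ) := by exact_mod_cast hn1
    rw [Real.norm_eq_abs, abs_div, abs_of_pos hn', ← add_div]
    exact div_le_div_of_nonneg_right (hbd n hnj) hn'.le
  -- conclude
  have hA' : Tendsto (fun n : ℕ => d n / n + A - (A / j) / n) atTop (nhds A) := by
    have h1 : Tendsto (fun n : ℕ => (A / j) / n) atTop (nhds 0) :=
      tendsto_const_nhds.div_atTop tendsto_natCast_atTop_atTop
    have := (hdlim.add_const A).sub h1
    simpa using this
  have : Tendsto (fun n : ℕ => a n / n) atTop (nhds A) := by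
    apply hA'.congr'
    filter_upwards [Filter.eventually_ge_atTop 1] with n hn
    have hn' : (0:ℝ) < (n:ℝ) := by exact_mod_cast hn
    simp only [hd]
    field_simp
    ring
  simpa [hA] using this
end

section
/- Let a sequence satisfy α_{n+1} = (1 − β_n/(n+ξ))α_n + γ_n for n ≥ n₀, where β_n → β > 0, γ_n → γ, and ξ is a real constant with n + ξ > β_n for n ≥ n₀. Then α_n/n → γ/(1+β). -/
/-!
With `L = G / (1 + B)`, the deviation `e n = α n - L n` satisfies
`e (n + 1) = (1 - β n / (n + ξ)) e n + δ n` where `δ n → G - L - L B = 0`.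
Eventually `0 < β n < n + ξ`, so the factor lies in `[0, 1]` and `|e n|` grows by at most `|δ n|`
per step; by Cesàro, `|e n| / n → 0`.
-/

open Filter Finset Topology

theorem abs_one_sub_div_le_one {b x : ℝ} (hb : 0 ≤ b) (hbx : b ≤ x) : |1 - b / x| ≤ 1 := by
  have h0 : 0 ≤ b / x := div_nonneg hb (hb.trans hbx)
  have h1 : b / x ≤ 1 := div_le_one_of_le₀ hbx (hb.trans hbx)
  rw [abs_le]
  constructor <;> linarith

theorem abs_le_add_sum_range_of_abs_succ_le {u c : ℕ → ℝ} {N : ℕ}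
    (h : ∀ n ≥ N, |u (n + 1)| ≤ |u n| + |c n|) :
    ∀ n ≥ N, |u n| ≤ |u N| + ∑ i ∈ range n, |c i| := by
  intro n hn
  induction n, hn using Nat.le_induction with
  | base => simpa using sum_nonneg fun i _ => abs_nonneg (c i)
  | succ n hn ih =>
    rw [sum_range_succ]
    linarith [h n hn]

theorem tendsto_div_natCast_zero_of_abs_succ_le {u c : ℕ → ℝ}
    (hc : Tendsto c atTop (𝓝 0)) (h : ∀ᶠ n in atTop, |u (n + 1)| ≤ |u n| + |c n|) :
    Tendsto (fun n => u n / n) atTop (𝓝 0) := by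
  obtain ⟨N, hN⟩ := eventually_atTop.mp h
  have hbound := abs_le_add_sum_range_of_abs_succ_le hN
  have hcesaro : Tendsto (fun n : ℕ => (n⁻¹ : ℝ) * ∑ i ∈ range n, |c i|) atTop (𝓝 0) := by
    simpa using hc.abs.cesaro
  have hmajorant := (tendsto_const_div_atTop_nhds_zero_nat |u N|).add hcesaro
  rw [add_zero] at hmajorant
  refine squeeze_zero_norm' ?_ hmajorant
  filter_upwards [eventually_ge_atTop N] with n hn
  rw [Real.norm_eq_abs, abs_div, Nat.abs_cast, ← inv_mul_eq_div, ← inv_mul_eq_div, ← mul_add]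
  exact mul_le_mul_of_nonneg_left (hbound n hn) (by positivity)

theorem Filter.Tendsto.natCast_mul_div_add {β : ℕ → ℝ} {B : ℝ} (hβ : Tendsto β atTop (𝓝 B))
    (ξ : ℝ) : Tendsto (fun n : ℕ => n * β n / (n + ξ)) atTop (𝓝 B) := by
  simpa [mul_div_right_comm] using (tendsto_natCast_div_add_atTop ξ).mul hβ

theorem chung_lu_recurrence (α β γ : ℕ → ℝ) (ξ B G : ℝ) (n₀ : ℕ)
    (hB : 0 < B)
    (hβ : Tendsto β atTop (nhds B))
    (hγ : Tendsto γ atTop (nhds G))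
    (hpos : ∀ n : ℕ, n₀ ≤ n → β n < (n : ℝ) + ξ)
    (hrec : ∀ n : ℕ, n₀ ≤ n →
      α (n + 1) = (1 - β n / ((n : ℝ) + ξ)) * α n + γ n) :
    Tendsto (fun n : ℕ => α n / n) atTop (nhds (G / (1 + B))) := by
  set L := G / (1 + B)
  set e : ℕ → ℝ := fun n => α n - L * n
  set δ : ℕ → ℝ := fun n => γ n - L - L * (n * β n / (n + ξ))
  have hδ : Tendsto δ atTop (𝓝 0) := by
    have hL : G - L - L * B = 0 := by
      have : 1 + B ≠ 0 := by positivity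
      simp only [L]; field_simp; ring
    simpa [hL] using (hγ.sub_const L).sub ((hβ.natCast_mul_div_add ξ).const_mul L)
  have he : ∀ᶠ n in atTop, |e (n + 1)| ≤ |e n| + |δ n| := by
    filter_upwards [hβ.eventually (lt_mem_nhds hB), eventually_ge_atTop n₀] with n hβn hn
    have hsucc : e (n + 1) = (1 - β n / (n + ξ)) * e n + δ n := by
      simp only [e, δ, hrec n hn]
      push_cast
      ring
    calc |e (n + 1)| ≤ |1 - β n / (n + ξ)| * |e n| + |δ n| := by
          rw [hsucc, ← abs_mul]; exact abs_add_le _ _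
      _ ≤ |e n| + |δ n| := by
          gcongr
          exact mul_le_of_le_one_left (abs_nonneg _)
            (abs_one_sub_div_le_one hβn.le (hpos n hn).le)
  have hlim := (tendsto_div_natCast_zero_of_abs_succ_le hδ he).const_add L
  rw [add_zero] at hlim
  refine hlim.congr' ?_
  filter_upwards [eventually_ne_atTop 0] with n hn
  simp only [e]
  field_simp
  ring
end

section
/- For every integer k ≥ 3, ∑_{j=k}^∞ 2Γ(j-1)/Γ(j+k) = 2(2k-1)Γ(k-1)/(k·Γ(2k)). -/
open Real Filter Finset Nat

private lemma fact_cast_pos (n : ℕ) : (0:ℝ) < (n ! : ℝ) := by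
  exact_mod_cast n.factorial_pos

theorem clustering_first_sum (k : ℕ) (hk : 3 ≤ k) :
    ∑' j : ℕ, 2 * Real.Gamma (((j + k : ℕ) : ℝ) - 1) /
        Real.Gamma (((j + k : ℕ) : ℝ) + k)
      = 2 * (2 * (k : ℝ) - 1) * Real.Gamma ((k : ℝ) - 1) /
        ((k : ℝ) * Real.Gamma (2 * k)) := by
  obtain ⟨m, rfl⟩ : ∃ m, k = m + 3 := ⟨k - 3, by omega⟩
  -- telescoping sequence
  set b : ℕ → ℝ := fun n => ((n + m + 1)! : ℝ) / ((n + 2*m + 4)! : ℝ) with hb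
  have hbdiff : ∀ n : ℕ, b n - b (n + 1)
      = (m + 3 : ℝ) * ((n + m + 1)! : ℝ) / ((n + 2*m + 5)! : ℝ) := by
    intro n
    have e1 : ((n + 1 + m + 1)! : ℝ) = ((n:ℝ) + m + 2) * ((n + m + 1)! : ℝ) := by
      rw [show n + 1 + m + 1 = (n + m + 1) + 1 from by ring, Nat.factorial_succ]
      push_cast; ring
    have e2 : ((n + 1 + 2*m + 4)! : ℝ) = ((n:ℝ) + 2*m + 5) * ((n + 2*m + 4)! : ℝ) := by
      rw [show n + 1 + 2*m + 4 = (n + 2*m + 4) + 1 from by ring, Nat.factorial_succ]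
      push_cast; ring
    have e3 : ((n + 2*m + 5)! : ℝ) = ((n:ℝ) + 2*m + 5) * ((n + 2*m + 4)! : ℝ) := by
      rw [show n + 2*m + 5 = (n + 2*m + 4) + 1 from by ring, Nat.factorial_succ]
      push_cast; ring
    have p2 := fact_cast_pos (n + 2*m + 4)
    simp only [hb]
    rw [e1, e2, e3]
    rw [div_sub_div _ _ p2.ne' (by positivity), div_eq_div_iff (by positivity) (by positivity)]
    ring
  -- b tends to 0
  have hb0 : Tendsto b atTop (nhds 0) := by
    have hle : ∀ n : ℕ, b n ≤ 1 / (n + 1 : ℝ) := by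
      intro n
      have p1 := fact_cast_pos (n + m + 1)
      have hmono : ((n + m + 2)! : ℝ) ≤ ((n + 2*m + 4)! : ℝ) := by
        exact_mod_cast Nat.factorial_le (by omega)
      have hfs : ((n + m + 2)! : ℝ) = (n + m + 2 : ℝ) * ((n + m + 1)! : ℝ) := by
        have : (n + m + 2) = (n + m + 1) + 1 := by ring
        rw [this, Nat.factorial_succ]; push_cast; ring
      have hge : (n + 1 : ℝ) * ((n + m + 1)! : ℝ) ≤ ((n + 2*m + 4)! : ℝ) := by
        refine le_trans ?_ hmono
        rw [hfs]
        have : (n + 1 : ℝ) ≤ (n + m + 2 : ℝ) := by push_cast; linarith [Nat.cast_nonneg (α := ℝ) m]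
        nlinarith
      rw [hb]
      rw [div_le_div_iff₀ (fact_cast_pos _) (by positivity)]
      nlinarith
    have hge : ∀ n : ℕ, (0:ℝ) ≤ b n := fun n => by
      rw [hb]; positivity
    refine tendsto_of_tendsto_of_tendsto_of_le_of_le tendsto_const_nhds
      ?_ hge hle
    exact tendsto_one_div_add_atTop_nhds_zero_nat
  -- telescoping HasSum
  have hsum : HasSum (fun n => b n - b (n + 1)) (b 0) := by
    rw [hasSum_iff_tendsto_nat_of_nonneg]
    · have : ∀ n : ℕ, ∑ i ∈ Finset.range n, (b i - b (i + 1)) = b 0 - b n :=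
        fun n => Finset.sum_range_sub' b n
      simp only [this]
      simpa using tendsto_const_nhds.sub hb0
    · intro i
      rw [hbdiff]
      positivity
  -- HasSum for the actual terms
  have hterm : ∀ j : ℕ, 2 * Real.Gamma (((j + (m+3) : ℕ) : ℝ) - 1) /
        Real.Gamma (((j + (m+3) : ℕ) : ℝ) + ((m+3 : ℕ) : ℝ))
      = (2 / (m + 3 : ℝ)) * (b j - b (j + 1)) := by
    intro j
    have hg1 : (((j + (m+3) : ℕ) : ℝ) - 1) = ((j + m + 1 : ℕ) : ℝ) + 1 := by
      push_cast; ring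
    have hg2 : (((j + (m+3) : ℕ) : ℝ) + ((m+3 : ℕ) : ℝ)) = ((j + 2*m + 5 : ℕ) : ℝ) + 1 := by
      push_cast; ring
    rw [hg1, Real.Gamma_nat_eq_factorial, hg2, Real.Gamma_nat_eq_factorial]
    rw [hbdiff]
    have p2 := fact_cast_pos (j + 2*m + 5)
    field_simp
  have hsum2 : HasSum (fun j : ℕ => 2 * Real.Gamma (((j + (m+3) : ℕ) : ℝ) - 1) /
        Real.Gamma (((j + (m+3) : ℕ) : ℝ) + ((m+3 : ℕ) : ℝ))) ((2 / (m + 3 : ℝ)) * b 0) := by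
    have := hsum.mul_left (2 / (m + 3 : ℝ))
    refine this.congr_fun fun j => hterm j
  rw [hsum2.tsum_eq]
  -- compute RHS
  have hR1 : ((m + 3 : ℕ) : ℝ) - 1 = ((m + 1 : ℕ) : ℝ) + 1 := by push_cast; ring
  have hR2 : (2 : ℝ) * ((m + 3 : ℕ) : ℝ) = ((2*m + 5 : ℕ) : ℝ) + 1 := by push_cast; ring
  rw [hR1, Real.Gamma_nat_eq_factorial, hR2, Real.Gamma_nat_eq_factorial]
  have hb0v : b 0 = ((m + 1)! : ℝ) / ((2*m + 4)! : ℝ) := by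
    simp [hb]
  rw [hb0v]
  have hfs : ((2*m + 5)! : ℝ) = (2*m + 5 : ℝ) * ((2*m + 4)! : ℝ) := by
    have : (2*m + 5) = (2*m + 4) + 1 := by ring
    rw [this, Nat.factorial_succ]; push_cast; ring
  rw [hfs]
  have p1 := fact_cast_pos (m + 1)
  have p2 := fact_cast_pos (2*m + 4)
  push_cast
  have h5 : (0:ℝ) < 2*(m:ℝ) + 5 := by positivity
  field_simp
  ring
end

section
/- The asymptotic clustering coefficient of a planar random Apollonian network (index k = 3), given by ∑_{j=3}^∞ [(2)(2j-3)/(j(j-1))] · [Γ(j)Γ(5)/(Γ(j+3)Γ(2))], equals 12π² − 353/3. -/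
/-!
Since `Γ(j) / Γ(j + 3) = 1 / (j (j + 1) (j + 2))`, the `j`-th term is the rational function
`48 (2j - 3) / (j² (j - 1) (j + 1) (j + 2))`, whose partial fraction decomposition is
`72 / j² - 8 / ((j - 1) j) - 92 / (j (j + 1)) + 28 / ((j + 1) (j + 2))`.
The three last pieces telescope, to `8 / 2`, `92 / 3` and `28 / 4` when summed over `j ≥ 3`,
and the first sums to `72 (π² / 6 - 1 - 1 / 4)` by Euler's `ζ(2) = π² / 6`.
-/

open Real Filter Topology Finset

theorem hasSum_sub_succ_of_antitone {f : ℕ → ℝ} (hf : Antitone f)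
    (hlim : Tendsto f atTop (𝓝 0)) : HasSum (fun n => f n - f (n + 1)) (f 0) := by
  rw [hasSum_iff_tendsto_nat_of_nonneg fun n => sub_nonneg.2 (hf n.le_succ),
    funext (sum_range_sub' f)]
  simpa using tendsto_const_nhds.sub hlim

theorem hasSum_one_div_add_mul_add_add_one {a : ℝ} (ha : 0 < a) :
    HasSum (fun n : ℕ => 1 / ((n + a) * (n + a + 1))) (1 / a) := by
  have hanti : Antitone fun n : ℕ => 1 / ((n : ℝ) + a) := fun m n hmn => by
    dsimp only
    gcongr
  have hlim : Tendsto (fun n : ℕ => 1 / ((n : ℝ) + a)) atTop (𝓝 0) := by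
    simp only [one_div]
    exact tendsto_inv_atTop_zero.comp
      (tendsto_atTop_add_const_right atTop a tendsto_natCast_atTop_atTop)
  convert hasSum_sub_succ_of_antitone hanti hlim using 1
  · funext n
    push_cast
    field_simp
    ring
  · simp

theorem hasSum_one_div_add_three_sq :
    HasSum (fun n : ℕ => 1 / ((n : ℝ) + 3) ^ 2) (π ^ 2 / 6 - 5 / 4) := by
  have h := (hasSum_nat_add_iff' 3).mpr hasSum_zeta_two
  norm_num [sum_range_succ] at h ⊢
  exact h

theorem Real.Gamma_add_three {x : ℝ} (hx : 0 < x) :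
    Gamma (x + 3) = x * (x + 1) * (x + 2) * Gamma x := by
  rw [show x + 3 = x + 2 + 1 by ring, Gamma_add_one (by positivity),
    show x + 2 = x + 1 + 1 by ring, Gamma_add_one (by positivity), Gamma_add_one hx.ne']
  ring

theorem clustering_term_eq_partial_fractions {x : ℝ} (hx : 1 < x) :
    2 * (2 * x - 3) / (x * (x - 1)) * (Gamma x * Gamma 5 / (Gamma (x + 3) * Gamma 2))
      = 72 / x ^ 2 - 8 / ((x - 1) * x) - 92 / (x * (x + 1)) + 28 / ((x + 1) * (x + 2)) := by
  have hx0 : 0 < x := by linarith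
  have hx1 : 0 < x - 1 := by linarith
  have hΓ5 : Gamma 5 = 24 := by
    rw [show (5 : ℝ) = (4 : ℕ) + 1 by norm_num, Gamma_nat_eq_factorial]
    norm_num [Nat.factorial]
  rw [Gamma_add_three hx0, hΓ5, Gamma_two]
  field_simp
  ring

theorem planar_ran_clustering_coefficient :
    ∑' j : ℕ,
        (2 * (2 * ((j + 3 : ℕ) : ℝ) - 3) / (((j + 3 : ℕ) : ℝ) * (((j + 3 : ℕ) : ℝ) - 1))) *
          (Real.Gamma ((j + 3 : ℕ) : ℝ) * Real.Gamma 5 /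
            (Real.Gamma (((j + 3 : ℕ) : ℝ) + 3) * Real.Gamma 2))
      = 12 * Real.pi ^ 2 - 353 / 3 := by
  have hsum := (((hasSum_one_div_add_three_sq.mul_left 72).sub
    ((hasSum_one_div_add_mul_add_add_one (a := 2) two_pos).mul_left 8)).sub
    ((hasSum_one_div_add_mul_add_add_one (a := 3) three_pos).mul_left 92)).add
    ((hasSum_one_div_add_mul_add_add_one (a := 4) four_pos).mul_left 28)
  refine (tsum_congr fun j => ?_).trans (hsum.tsum_eq.trans (by ring))
  rw [clustering_term_eq_partial_fractions (by norm_cast; omega)]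
  push_cast
  ring
end

section
/- For k ≥ 3, the Gini index Gini_n = 1 − (1/(n+1))·((3k−2)/(k−2) − 2^{2k−1}((k−1)n+2)Γ(k−1/2)Γ(k+n+1)/((k−2)Γ(1/2)Γ(2k+n))) tends to 1 as n → ∞. -/
open Real Filter

private lemma gamma_add_nat' (x : ℝ) (hx : 0 < x) (m : ℕ) :
    Real.Gamma (x + m) = (∏ i ∈ Finset.range m, (x + i)) * Real.Gamma x := by
  induction m with
  | zero => simp
  | succ m ih =>
    have h1 : x + ((m + 1 : ℕ) : ℝ) = (x + m) + 1 := by push_cast; ring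
    have h2 : x + (m : ℝ) ≠ 0 := by positivity
    rw [h1, Real.Gamma_add_one h2, ih, Finset.prod_range_succ]
    push_cast
    ring

theorem gini_index_tendsto_one (k : ℕ) (hk : 3 ≤ k) :
    Tendsto (fun n : ℕ =>
        1 - (1 / ((n : ℝ) + 1)) *
          ((3 * (k : ℝ) - 2) / ((k : ℝ) - 2) -
            2 ^ (2 * k - 1) * (((k : ℝ) - 1) * n + 2) * Real.Gamma ((k : ℝ) - 1 / 2) *
              Real.Gamma ((k : ℝ) + n + 1) /
            (((k : ℝ) - 2) * Real.Gamma (1 / 2) * Real.Gamma (2 * (k : ℝ) + n))))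
      atTop (nhds 1) := by
  have hk3 : (3 : ℝ) ≤ (k : ℝ) := by exact_mod_cast hk
  have hk2 : (0 : ℝ) < (k : ℝ) - 2 := by linarith
  have hG1 : 0 < Real.Gamma ((k : ℝ) - 1 / 2) := Real.Gamma_pos_of_pos (by linarith)
  have hG2 : 0 < Real.Gamma (1 / 2 : ℝ) := Real.Gamma_pos_of_pos (by norm_num)
  set D : ℕ → ℝ := fun n =>
      2 ^ (2 * k - 1) * (((k : ℝ) - 1) * n + 2) * Real.Gamma ((k : ℝ) - 1 / 2) *
        Real.Gamma ((k : ℝ) + n + 1) /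
      (((k : ℝ) - 2) * Real.Gamma (1 / 2) * Real.Gamma (2 * (k : ℝ) + n)) with hDdef
  set P : ℕ → ℝ := fun n => ∏ i ∈ Finset.range (k - 1), (((k : ℝ) + n + 1) + i) with hPdef
  have hx : ∀ n : ℕ, (0 : ℝ) < (k : ℝ) + n + 1 := fun n => by positivity
  have hGx : ∀ n : ℕ, 0 < Real.Gamma ((k : ℝ) + n + 1) := fun n => Real.Gamma_pos_of_pos (hx n)
  have hPpos : ∀ n : ℕ, 0 < P n := fun n => Finset.prod_pos (fun i _ => by positivity)
  have hGamma2k : ∀ n : ℕ,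
      Real.Gamma (2 * (k : ℝ) + n) = P n * Real.Gamma ((k : ℝ) + n + 1) := by
    intro n
    have hcast : ((k - 1 : ℕ) : ℝ) = (k : ℝ) - 1 := by
      have : (1 : ℕ) ≤ k := by omega
      push_cast [this]; ring
    have h : 2 * (k : ℝ) + n = ((k : ℝ) + n + 1) + ((k - 1 : ℕ) : ℝ) := by
      rw [hcast]; ring
    rw [h, gamma_add_nat' _ (hx n)]
  have hG2k : ∀ n : ℕ, 0 < Real.Gamma (2 * (k : ℝ) + n) := by
    intro n; rw [hGamma2k n]; exact mul_pos (hPpos n) (hGx n)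
  -- Squeeze: 0 ≤ D n ≤ CB / (n+1)
  have hP2 : ∀ n : ℕ, ((n : ℝ) + 1) ^ 2 ≤ P n := by
    intro n
    have h1 : ((n : ℝ) + 1) ^ (k - 1) ≤ P n := by
      calc ((n : ℝ) + 1) ^ (k - 1)
          = ∏ _i ∈ Finset.range (k - 1), ((n : ℝ) + 1) := by
            rw [Finset.prod_const, Finset.card_range]
        _ ≤ P n := Finset.prod_le_prod (fun i _ => by positivity)
            (fun i _ => by linarith [Nat.cast_nonneg (α := ℝ) i, hk3])
    have h2 : ((n : ℝ) + 1) ^ 2 ≤ ((n : ℝ) + 1) ^ (k - 1) :=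
      pow_le_pow_right₀ (by linarith [Nat.cast_nonneg (α := ℝ) n]) (by omega)
    linarith
  have hDnonneg : ∀ n : ℕ, 0 ≤ D n := by
    intro n
    apply div_nonneg
    · have hn : (0 : ℝ) ≤ ((k : ℝ) - 1) * n + 2 := by
        have := Nat.cast_nonneg (α := ℝ) n
        nlinarith
      positivity
    · positivity
  have hDle : ∀ n : ℕ,
      D n ≤ (2 ^ (2 * k - 1) * (k : ℝ) * Real.Gamma ((k : ℝ) - 1 / 2)) /
        ((((k : ℝ) - 2) * Real.Gamma (1 / 2)) * ((n : ℝ) + 1)) := by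
    intro n
    have hnn : (0 : ℝ) ≤ (n : ℝ) := Nat.cast_nonneg n
    rw [hDdef]
    simp only
    rw [hGamma2k n]
    rw [div_le_div_iff₀ (by positivity) (by positivity)]
    have key : (((k : ℝ) - 1) * n + 2) * ((n : ℝ) + 1) ≤ (k : ℝ) * P n := by
      have h2 : (((k : ℝ) - 1) * n + 2) * ((n : ℝ) + 1) ≤ (k : ℝ) * ((n : ℝ) + 1) ^ 2 := by
        nlinarith
      nlinarith [hP2 n]
    calc 2 ^ (2 * k - 1) * (((k : ℝ) - 1) * n + 2) * Real.Gamma ((k : ℝ) - 1 / 2) *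
          Real.Gamma ((k : ℝ) + n + 1) * ((((k : ℝ) - 2) * Real.Gamma (1 / 2)) * ((n : ℝ) + 1))
        = (2 ^ (2 * k - 1) * Real.Gamma ((k : ℝ) - 1 / 2) * Real.Gamma ((k : ℝ) + n + 1) *
            (((k : ℝ) - 2) * Real.Gamma (1 / 2))) * ((((k : ℝ) - 1) * n + 2) * ((n : ℝ) + 1)) := by
          ring
      _ ≤ (2 ^ (2 * k - 1) * Real.Gamma ((k : ℝ) - 1 / 2) * Real.Gamma ((k : ℝ) + n + 1) *
            (((k : ℝ) - 2) * Real.Gamma (1 / 2))) * ((k : ℝ) * P n) := by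
          apply mul_le_mul_of_nonneg_left key
          positivity
      _ = 2 ^ (2 * k - 1) * (k : ℝ) * Real.Gamma ((k : ℝ) - 1 / 2) *
            (((k : ℝ) - 2) * Real.Gamma (1 / 2) * (P n * Real.Gamma ((k : ℝ) + n + 1))) := by
          ring
  have hinv : Tendsto (fun n : ℕ => 1 / ((n : ℝ) + 1)) atTop (nhds 0) :=
    tendsto_one_div_add_atTop_nhds_zero_nat
  have hbound : Tendsto (fun n : ℕ =>
      (2 ^ (2 * k - 1) * (k : ℝ) * Real.Gamma ((k : ℝ) - 1 / 2)) /
        ((((k : ℝ) - 2) * Real.Gamma (1 / 2)) * ((n : ℝ) + 1))) atTop (nhds 0) := by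
    have h : ∀ n : ℕ,
        (2 ^ (2 * k - 1) * (k : ℝ) * Real.Gamma ((k : ℝ) - 1 / 2)) /
          ((((k : ℝ) - 2) * Real.Gamma (1 / 2)) * ((n : ℝ) + 1))
        = (2 ^ (2 * k - 1) * (k : ℝ) * Real.Gamma ((k : ℝ) - 1 / 2) /
            (((k : ℝ) - 2) * Real.Gamma (1 / 2))) * (1 / ((n : ℝ) + 1)) := by
      intro n
      field_simp
    simp only [h]
    have := hinv.const_mul (2 ^ (2 * k - 1) * (k : ℝ) * Real.Gamma ((k : ℝ) - 1 / 2) /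
        (((k : ℝ) - 2) * Real.Gamma (1 / 2)))
    simpa using this
  have hDt : Tendsto D atTop (nhds 0) := squeeze_zero hDnonneg hDle hbound
  have hmain : Tendsto (fun n : ℕ =>
      (1 / ((n : ℝ) + 1)) *
        ((3 * (k : ℝ) - 2) / ((k : ℝ) - 2) - D n)) atTop (nhds 0) := by
    have := hinv.mul ((tendsto_const_nhds (x := (3 * (k : ℝ) - 2) / ((k : ℝ) - 2))
        (f := atTop)).sub hDt)
    simpa using this
  have h2 : Tendsto (fun n : ℕ =>
      1 - (1 / ((n : ℝ) + 1)) * ((3 * (k : ℝ) - 2) / ((k : ℝ) - 2) - D n)) atTop (nhds 1) := by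
    have := (tendsto_const_nhds (x := (1 : ℝ)) (f := atTop (α := ℕ))).sub hmain
    simpa using this
  exact h2
end
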